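/- Let W be a Z/2-graded differential algebra over a field k of characteristic zero with H(W, d) ≅ k, let p ∈ W be an even central cocycle which is a coboundary, generating a polynomial subalgebra k[p] ⊂ W, and suppose W is a free k[p]-module. Then H(W/⟨p⟩, d) is two-dimensional over k, with basis {[1], [C_p]} where C_p ∈ W satisfies dC_p = p, and [C_p]² = B(p,p)·[1] where B(p,p) = [C_p · C_p] ∈ H(W) ≅ k. Hence H(W/⟨p⟩) ≅ Cl(k·p, B) as algebras. -/

import Mathlib

/-!
Multiplication by `p` is injective on `W`, because `W` is free over the polynomial ring `k[p]`.
A cocycle of `F = W/⟨p⟩` lifts to some `w` with `d w = p u`; cancelling `p` in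
`p · d u = d² w = 0` makes `u` a cocycle, so `u = c + d v` with `c ∈ k`, and then
`w - c C_p - p v` is a cocycle of `W`. Hence every class is `c' [1] + c [C_p]`. Applying `d` to a
relation `s + t C_p = d v + p m` and cancelling `p` gives `t = d m`, so `t = 0`, and then `s = 0`:
constants are not coboundaries. Products of classes may be computed on the representatives
`s + t C_p`, since modulo `p` a coboundary times a cocycle and `C_p` times a coboundary are
coboundaries; `C_p² = B + d v` is the Clifford relation.
-/

noncomputable abbrev cohomology {k M : Type*} [Field k] [AddCommGroup M] [Module k M]
    (d : M →ₗ[k] M) :=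
  LinearMap.ker d ⧸ (LinearMap.range d).comap (LinearMap.ker d).subtype

open DirectSum Polynomial

section GradedLeibniz
variable {k W : Type*} [CommRing k] [Ring W] [Algebra k W] {𝒜 : ZMod 2 → Submodule k W}
  {d : W →ₗ[k] W}

variable (𝒜 d) in
def IsOddLeibniz : Prop :=
  ∀ (i : ZMod 2) (x : W), x ∈ 𝒜 i → ∀ y : W,
    d (x * y) = d x * y + ((-1 : k) ^ i.val) • (x * d y)

theorem map_mul_of_mem_zero (hleib : IsOddLeibniz 𝒜 d) {x : W} (hx : x ∈ 𝒜 0) (y : W) :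
    d (x * y) = d x * y + x * d y := by
  simpa using hleib 0 x hx y

theorem map_mul_of_mem_one (hleib : IsOddLeibniz 𝒜 d) {x : W} (hx : x ∈ 𝒜 1) (y : W) :
    d (x * y) = d x * y - x * d y := by
  simpa [ZMod.val_one, sub_eq_add_neg] using hleib 1 x hx y

theorem map_one_eq_zero_of_leibniz [SetLike.GradedOne 𝒜] (hleib : IsOddLeibniz 𝒜 d) :
    d 1 = 0 := by
  simpa using map_mul_of_mem_zero hleib (SetLike.one_mem_graded 𝒜) 1

variable (𝒜) in
theorem exists_mem_zero_mem_one_add_eq [GradedAlgebra 𝒜] (x : W) :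
    ∃ x₀ ∈ 𝒜 0, ∃ x₁ ∈ 𝒜 1, x₀ + x₁ = x := by
  classical
  refine ⟨_, (decompose 𝒜 x 0).2, _, (decompose 𝒜 x 1).2, ?_⟩
  conv_rhs => rw [← sum_support_decompose 𝒜 x]
  rw [Finset.sum_subset (Finset.subset_univ _) fun i _ hi => by
    rw [DFinsupp.notMem_support_iff.mp hi, ZeroMemClass.coe_zero]]
  exact (Fin.sum_univ_two (fun i : Fin 2 => (decompose 𝒜 x i : W))).symm

theorem exists_map_mul_eq_map_mul_add_mul_map [GradedAlgebra 𝒜] (hleib : IsOddLeibniz 𝒜 d)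
    (x y : W) :
    ∃ z, d (x * y) = d x * y + z * d y := by
  obtain ⟨x₀, h₀, x₁, h₁, rfl⟩ := exists_mem_zero_mem_one_add_eq 𝒜 x
  refine ⟨x₀ - x₁, ?_⟩
  rw [add_mul, map_add, map_mul_of_mem_zero hleib h₀, map_mul_of_mem_one hleib h₁, map_add]
  noncomm_ring

end GradedLeibniz

section Regularity
variable {k W : Type*} [Field k] [Ring W] [Algebra k W]

theorem transcendental_of_linearIndependent_pow {p : W}
    (h : LinearIndependent k fun m : ℕ => p ^ m) : Transcendental k p := by
  refine transcendental_iff.mpr fun q hq => ?_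
  rw [aeval_eq_sum_range] at hq
  exact leadingCoeff_eq_zero.mp <|
    linearIndependent_iff'.mp h _ _ hq _ (Finset.self_mem_range_succ _)

theorem Transcendental.eq_zero_of_mul_eq_zero_of_mem_adjoin {p s : W} (hp : Transcendental k p)
    (hs : s ∈ Algebra.adjoin k {p}) (h : p * s = 0) : s = 0 := by
  rw [Algebra.adjoin_singleton_eq_range_aeval] at hs
  obtain ⟨q, rfl⟩ := hs
  have hXq : X * q = 0 := transcendental_iff.mp hp _ (by rwa [map_mul, aeval_X])
  rw [(mul_eq_zero.mp hXq).resolve_left X_ne_zero, map_zero]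

theorem eq_zero_of_mul_eq_zero_of_bijective_sum {R : Subalgebra k W} {ι : Type*} {e : ι → W}
    (he : Function.Bijective fun f : ι →₀ R => f.sum fun j s => (s : W) * e j)
    {r : R} (hr : ∀ s : R, r * s = 0 → s = 0) {x : W} (hx : (r : W) * x = 0) : x = 0 := by
  obtain ⟨f, rfl⟩ := he.2 x
  have hrf : r • f = 0 := by
    refine he.1 ?_
    simp only [Finsupp.sum_zero_index]
    rw [Finsupp.sum_smul_index' fun _ => by simp, ← hx, Finsupp.mul_sum]
    simp only [smul_eq_mul, Subalgebra.coe_mul, mul_assoc]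
  have hf : f = 0 := Finsupp.ext fun j => hr _ (by simpa using DFunLike.congr_fun hrf j)
  simp [hf]

theorem eq_zero_of_mul_eq_zero_of_free {p : W} (hpoly : LinearIndependent k fun m : ℕ => p ^ m)
    (hfree : ∃ (ι : Type*) (e : ι → W),
      Function.Bijective fun f : ι →₀ Algebra.adjoin k {p} => f.sum fun j s => (s : W) * e j)
    {x : W} (hx : p * x = 0) : x = 0 := by
  obtain ⟨ι, e, he⟩ := hfree
  refine eq_zero_of_mul_eq_zero_of_bijective_sum he
    (r := ⟨p, Algebra.self_mem_adjoin_singleton k p⟩) (fun s hs => Subtype.ext ?_) hx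
  exact (transcendental_of_linearIndependent_pow hpoly).eq_zero_of_mul_eq_zero_of_mem_adjoin s.2
    (congrArg Subtype.val hs)

end Regularity

theorem top_le_span_range_pair {R M : Type*} [Ring R] [AddCommGroup M] [Module R M] {x y : M}
    (h : ∀ z : M, ∃ s t : R, s • x + t • y = z) :
    ⊤ ≤ Submodule.span R (Set.range ![x, y]) :=
  fun z _ => by
    rw [Matrix.range_cons_cons_empty, Submodule.mem_span_pair]
    exact h z

theorem fin_one_eq_smul_single {R : Type*} [Semiring R] (m : Fin 1 → R) :
    m = m 0 • Pi.single 0 1 :=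
  funext fun i => by fin_cases i; simp

namespace CliffordAlgebra
variable {k : Type*} [CommRing k] (Q : QuadraticForm k (Fin 1 → k))

theorem smul_one_add_smul_ι_mul (s t s' t' : k) :
    (s • 1 + t • ι Q (Pi.single 0 1)) * (s' • 1 + t' • ι Q (Pi.single 0 1)) =
      (s * s' + t * t' * Q (Pi.single 0 1)) • 1 + (s * t' + t * s') • ι Q (Pi.single 0 1) := by
  simp only [mul_add, add_mul, smul_mul_smul_comm, one_mul, mul_one, ι_sq_scalar,
    Algebra.algebraMap_eq_smul_one]
  module

theorem exists_eq_smul_one_add_smul_ι (x : CliffordAlgebra Q) :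
    ∃ s t : k, x = s • 1 + t • ι Q (Pi.single 0 1) := by
  induction x using CliffordAlgebra.induction with
  | algebraMap r => exact ⟨r, 0, by simp [Algebra.algebraMap_eq_smul_one]⟩
  | ι m =>
    refine ⟨0, m 0, ?_⟩
    rw [zero_smul, zero_add, ← map_smul, ← fin_one_eq_smul_single]
  | mul x y hx hy =>
    obtain ⟨s, t, rfl⟩ := hx
    obtain ⟨s', t', rfl⟩ := hy
    exact ⟨_, _, smul_one_add_smul_ι_mul Q s t s' t'⟩
  | add x y hx hy =>
    obtain ⟨s, t, rfl⟩ := hx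
    obtain ⟨s', t', rfl⟩ := hy
    exact ⟨s + s', t + t', by module⟩

theorem linearIndependent_one_ι : LinearIndependent k ![1, ι Q (Pi.single 0 1)] := by
  -- `ι Q (Pi.single 0 1)` acts as the companion matrix of `X² - Q (Pi.single 0 1)`
  set M : Matrix (Fin 2) (Fin 2) k := !![0, 1; Q (Pi.single 0 1), 0]
  have hMM : M * M = algebraMap k _ (Q (Pi.single 0 1)) := by
    ext i j
    fin_cases i <;> fin_cases j <;> simp [M, Matrix.mul_apply, Matrix.algebraMap_matrix_apply]
  let f : (Fin 1 → k) →ₗ[k] Matrix (Fin 2) (Fin 2) k := (LinearMap.proj 0).smulRight M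
  have hM : ∀ m, f m * f m = algebraMap k _ (Q m) := by
    intro m
    simp only [f, LinearMap.smulRight_apply, LinearMap.proj_apply]
    rw [smul_mul_smul_comm, hMM, fin_one_eq_smul_single m, QuadraticMap.map_smul,
      Algebra.smul_def, ← map_mul]
    simp
  let ρ := lift Q ⟨f, hM⟩
  refine LinearIndependent.pair_iff.mpr fun s t hst => ?_
  have hρ := congrArg ρ hst
  simp only [map_add, map_smul, map_one, ρ] at hρ
  rw [lift_ι_apply] at hρ
  have h00 := congrFun (congrFun hρ 0) 0
  have h01 := congrFun (congrFun hρ 0) 1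
  simp [f, M] at h00 h01
  exact ⟨h00, h01⟩

theorem exists_linearEquiv_smul_one_add_smul_ι {H : Type*} [AddCommGroup H] [Module k H]
    {e₀ e₁ : H} (hli : LinearIndependent k ![e₀, e₁])
    (hsp : ∀ z : H, ∃ s t : k, s • e₀ + t • e₁ = z) :
    ∃ φ : CliffordAlgebra Q ≃ₗ[k] H,
      ∀ s t : k, φ (s • 1 + t • ι Q (Pi.single 0 1)) = s • e₀ + t • e₁ := by
  let bCl := Module.Basis.mk (linearIndependent_one_ι Q) <| top_le_span_range_pair fun x =>
    (exists_eq_smul_one_add_smul_ι Q x).imp fun _ => .imp fun _ => Eq.symm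
  refine ⟨bCl.equiv (Module.Basis.mk hli (top_le_span_range_pair hsp)) (Equiv.refl _),
    fun s t => ?_⟩
  have h₀ : bCl 0 = 1 := Module.Basis.mk_apply _ _ _
  have h₁ : bCl 1 = ι Q (Pi.single 0 1) := Module.Basis.mk_apply _ _ _
  rw [map_add, map_smul, map_smul, ← h₀, ← h₁, Module.Basis.equiv_apply,
    Module.Basis.equiv_apply]
  simp

end CliffordAlgebra

namespace cohomology
variable {k M : Type*} [Field k] [AddCommGroup M] [Module k M] {d : M →ₗ[k] M}

theorem mk_eq_mk_iff {a b : LinearMap.ker d} :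
    (Submodule.Quotient.mk a : cohomology d) = Submodule.Quotient.mk b ↔
      (a : M) - b ∈ LinearMap.range d := by
  rw [Submodule.Quotient.eq, Submodule.mem_comap, Submodule.coe_subtype, Submodule.coe_sub]

theorem mk_eq_zero_iff {a : LinearMap.ker d} :
    (Submodule.Quotient.mk a : cohomology d) = 0 ↔ (a : M) ∈ LinearMap.range d := by
  rw [Submodule.Quotient.mk_eq_zero, Submodule.mem_comap, Submodule.coe_subtype]

theorem smul_mk_add_smul_mk (s t : k) (a b : LinearMap.ker d) :
    s • (Submodule.Quotient.mk a : cohomology d) + t • Submodule.Quotient.mk b =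
      Submodule.Quotient.mk (s • a + t • b) := by
  rw [Submodule.Quotient.mk_add, Submodule.Quotient.mk_smul, Submodule.Quotient.mk_smul]

end cohomology

section Quotient
variable {k W F : Type*} [Field k] [Ring W] [Algebra k W] [Ring F] [Algebra k F]
  {d : W →ₗ[k] W} {p Cp : W} {π : W →ₐ[k] F} {dF : F →ₗ[k] F}

theorem exists_eq_algebraMap_add_smul_add_mul_add_map (hd2 : ∀ w, d (d w) = 0)
    (hdp : ∀ u, d (p * u) = p * d u) (hreg : ∀ x, p * x = 0 → x = 0)
    (htriv : ∀ w, d w = 0 → ∃ (c : k) (v : W), w = algebraMap k W c + d v)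
    (hdCp : d Cp = p) {w u : W} (hu : d w = p * u) :
    ∃ (c c' : k) (v v' : W), w = algebraMap k W c' + c • Cp + p * v + d v' := by
  have hdu : d u = 0 := hreg _ (by rw [← hdp, ← hu, hd2])
  obtain ⟨c, v, rfl⟩ := htriv u hdu
  have hclosed : d (w - c • Cp - p * v) = 0 := by
    rw [map_sub, map_sub, map_smul, hdCp, hdp, hu, mul_add, ← Algebra.commutes,
      ← Algebra.smul_def]
    abel
  obtain ⟨c', v', hv'⟩ := htriv _ hclosed
  refine ⟨c, c', v, v', ?_⟩
  rw [sub_sub, sub_eq_iff_eq_add] at hv'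
  rw [hv']
  abel

theorem exists_sub_mem_range_of_map_eq_zero (hd2 : ∀ w, d (d w) = 0)
    (hdp : ∀ u, d (p * u) = p * d u) (hreg : ∀ x, p * x = 0 → x = 0)
    (htriv : ∀ w, d w = 0 → ∃ (c : k) (v : W), w = algebraMap k W c + d v)
    (hdCp : d Cp = p) (hπ : Function.Surjective π) (hπker : ∀ w, π w = 0 → ∃ m, w = p * m)
    (hπp : π p = 0) (hdF : ∀ w, dF (π w) = π (d w)) {f : F} (hf : dF f = 0) :
    ∃ s t : k, f - (s • 1 + t • π Cp) ∈ LinearMap.range dF := by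
  obtain ⟨w, rfl⟩ := hπ f
  obtain ⟨u, hu⟩ := hπker _ (by rw [← hdF, hf])
  obtain ⟨c, c', v, v', rfl⟩ :=
    exists_eq_algebraMap_add_smul_add_mul_add_map hd2 hdp hreg htriv hdCp hu
  refine ⟨c', c, π v', ?_⟩
  simp [hdF, hπp, Algebra.algebraMap_eq_smul_one]

theorem eq_zero_of_smul_one_add_smul_eq (hd2 : ∀ w, d (d w) = 0) (hd1 : d 1 = 0)
    (hdp : ∀ u, d (p * u) = p * d u) (hreg : ∀ x, p * x = 0 → x = 0)
    (htriv : ∀ w, d w = 0 → ∃ (c : k) (v : W), w = algebraMap k W c + d v)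
    (hinj : ∀ c : k, (∃ v : W, algebraMap k W c = d v) → c = 0)
    (hdCp : d Cp = p) {s t : k} {v m : W} (h : s • 1 + t • Cp = d v + p * m) :
    s = 0 ∧ t = 0 := by
  have hdm : d m = t • 1 := by
    have hd := congrArg d h
    rw [map_add, map_add, map_smul, map_smul, hd1, hdCp, hd2, hdp, smul_zero, zero_add,
      zero_add] at hd
    refine sub_eq_zero.mp (hreg _ ?_)
    rw [mul_sub, ← hd, mul_smul_comm, mul_one, sub_self]
  have ht : t = 0 := hinj t ⟨m, by rw [hdm, Algebra.algebraMap_eq_smul_one]⟩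
  subst ht
  obtain ⟨c, n, rfl⟩ := htriv m (by rw [hdm, zero_smul])
  refine ⟨hinj s ⟨v + c • Cp + p * n, ?_⟩, rfl⟩
  rw [zero_smul, add_zero] at h
  rw [Algebra.algebraMap_eq_smul_one, h, map_add, map_add, map_smul, hdCp, hdp, mul_add,
    ← Algebra.commutes, ← Algebra.smul_def]
  abel

theorem eq_zero_of_smul_one_add_smul_mem_range (hd2 : ∀ w, d (d w) = 0) (hd1 : d 1 = 0)
    (hdp : ∀ u, d (p * u) = p * d u) (hreg : ∀ x, p * x = 0 → x = 0)
    (htriv : ∀ w, d w = 0 → ∃ (c : k) (v : W), w = algebraMap k W c + d v)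
    (hinj : ∀ c : k, (∃ v : W, algebraMap k W c = d v) → c = 0)
    (hdCp : d Cp = p) (hπ : Function.Surjective π) (hπker : ∀ w, π w = 0 → ∃ m, w = p * m)
    (hdF : ∀ w, dF (π w) = π (d w)) {s t : k}
    (h : s • 1 + t • π Cp ∈ LinearMap.range dF) :
    s = 0 ∧ t = 0 := by
  obtain ⟨x, hx⟩ := h
  obtain ⟨v, rfl⟩ := hπ x
  obtain ⟨m, hm⟩ := hπker (s • 1 + t • Cp - d v) (by simp [← hdF, hx])
  exact eq_zero_of_smul_one_add_smul_eq hd2 hd1 hdp hreg htriv hinj hdCp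
    (sub_eq_iff_eq_add'.mp hm)

theorem map_mul_mem_range_of_map_eq_zero (hπ : Function.Surjective π)
    (hdF : ∀ w, dF (π w) = π (d w)) (hmul : ∀ x y : W, ∃ z, d (x * y) = d x * y + z * d y)
    {f : F} (hf : dF f = 0) (x : F) : dF x * f ∈ LinearMap.range dF := by
  obtain ⟨w, rfl⟩ := hπ f
  obtain ⟨u, rfl⟩ := hπ x
  obtain ⟨z, hz⟩ := hmul u w
  refine ⟨π (u * w), ?_⟩
  rw [hdF, hz, map_add, map_mul, map_mul, ← hdF, ← hdF, hf, mul_zero, add_zero]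

theorem mul_map_mem_range (hπ : Function.Surjective π) (hπp : π p = 0)
    (hdF : ∀ w, dF (π w) = π (d w)) (hCp : ∀ y, d (Cp * y) = p * y - Cp * d y) (x : F) :
    π Cp * dF x ∈ LinearMap.range dF := by
  obtain ⟨y, rfl⟩ := hπ x
  refine ⟨-π (Cp * y), ?_⟩
  rw [map_neg, hdF, hCp, map_sub, map_mul, map_mul, hπp, zero_mul, zero_sub, neg_neg, hdF]

theorem mul_sub_smul_one_add_smul_mem_range (hπ : Function.Surjective π) (hπp : π p = 0)
    (hdF : ∀ w, dF (π w) = π (d w)) (hmul : ∀ x y : W, ∃ z, d (x * y) = d x * y + z * d y)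
    (hCp : ∀ y, d (Cp * y) = p * y - Cp * d y) {B : k} {v : W}
    (hB : Cp * Cp = algebraMap k W B + d v) {a b : F} (hb : dF b = 0) {s t s' t' : k}
    (ha : a - (s • 1 + t • π Cp) ∈ LinearMap.range dF)
    (hb' : b - (s' • 1 + t' • π Cp) ∈ LinearMap.range dF) :
    a * b - ((s * s' + t * t' * B) • 1 + (s * t' + t * s') • π Cp) ∈ LinearMap.range dF := by
  obtain ⟨x, hx⟩ := ha
  obtain ⟨y, hy⟩ := hb'
  obtain rfl : a = s • 1 + t • π Cp + dF x := by rw [hx]; abel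
  obtain rfl : b = s' • 1 + t' • π Cp + dF y := by rw [hy]; abel
  have hCC : π Cp * π Cp - B • 1 = dF (π v) := by
    rw [hdF, ← map_mul, hB, Algebra.algebraMap_eq_smul_one]
    simp
  have key : (s • 1 + t • π Cp + dF x) * (s' • 1 + t' • π Cp + dF y) -
      ((s * s' + t * t' * B) • 1 + (s * t' + t * s') • π Cp) =
      dF x * (s' • 1 + t' • π Cp + dF y) + s • dF y + t • (π Cp * dF y) +
        (t * t') • (π Cp * π Cp - B • 1) := by
    simp only [add_mul, mul_add, smul_mul_assoc, mul_smul_comm, one_mul, mul_one, smul_sub]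
    module
  rw [key, hCC]
  refine add_mem (add_mem (add_mem ?_ ?_) ?_) ?_
  · exact map_mul_mem_range_of_map_eq_zero hπ hdF hmul hb x
  · exact Submodule.smul_mem _ _ ⟨y, rfl⟩
  · exact Submodule.smul_mem _ _ (mul_map_mem_range hπ hπp hdF hCp y)
  · exact Submodule.smul_mem _ _ ⟨π v, rfl⟩

theorem linearIndependent_mk_one_mk (hd2 : ∀ w, d (d w) = 0) (hd1 : d 1 = 0)
    (hdp : ∀ u, d (p * u) = p * d u) (hreg : ∀ x, p * x = 0 → x = 0)
    (htriv : ∀ w, d w = 0 → ∃ (c : k) (v : W), w = algebraMap k W c + d v)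
    (hinj : ∀ c : k, (∃ v : W, algebraMap k W c = d v) → c = 0)
    (hdCp : d Cp = p) (hπ : Function.Surjective π) (hπker : ∀ w, π w = 0 → ∃ m, w = p * m)
    (hdF : ∀ w, dF (π w) = π (d w)) (h1 : (1 : F) ∈ LinearMap.ker dF)
    (hC : π Cp ∈ LinearMap.ker dF) :
    LinearIndependent k ![(Submodule.Quotient.mk ⟨1, h1⟩ : cohomology dF),
      Submodule.Quotient.mk ⟨π Cp, hC⟩] := by
  refine LinearIndependent.pair_iff.mpr fun s t hst => ?_
  rw [cohomology.smul_mk_add_smul_mk, cohomology.mk_eq_zero_iff] at hst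
  exact eq_zero_of_smul_one_add_smul_mem_range hd2 hd1 hdp hreg htriv hinj hdCp hπ hπker hdF hst

theorem exists_smul_mk_one_add_smul_mk_eq (hd2 : ∀ w, d (d w) = 0)
    (hdp : ∀ u, d (p * u) = p * d u) (hreg : ∀ x, p * x = 0 → x = 0)
    (htriv : ∀ w, d w = 0 → ∃ (c : k) (v : W), w = algebraMap k W c + d v)
    (hdCp : d Cp = p) (hπ : Function.Surjective π) (hπker : ∀ w, π w = 0 → ∃ m, w = p * m)
    (hπp : π p = 0) (hdF : ∀ w, dF (π w) = π (d w)) (h1 : (1 : F) ∈ LinearMap.ker dF)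
    (hC : π Cp ∈ LinearMap.ker dF) (z : cohomology dF) :
    ∃ s t : k, s • Submodule.Quotient.mk ⟨1, h1⟩ +
      t • Submodule.Quotient.mk ⟨π Cp, hC⟩ = z := by
  obtain ⟨⟨f, hf⟩, rfl⟩ := Submodule.Quotient.mk_surjective _ z
  obtain ⟨s, t, h⟩ :=
    exists_sub_mem_range_of_map_eq_zero hd2 hdp hreg htriv hdCp hπ hπker hπp hdF hf
  refine ⟨s, t, ?_⟩
  rw [cohomology.smul_mk_add_smul_mk, eq_comm, cohomology.mk_eq_mk_iff]
  exact h

theorem mk_mul_eq_smul_add_smul (hπ : Function.Surjective π) (hπp : π p = 0)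
    (hdF : ∀ w, dF (π w) = π (d w)) (hmul : ∀ x y : W, ∃ z, d (x * y) = d x * y + z * d y)
    (hCp : ∀ y, d (Cp * y) = p * y - Cp * d y) {B : k} {v : W}
    (hB : Cp * Cp = algebraMap k W B + d v) (h1 : (1 : F) ∈ LinearMap.ker dF)
    (hC : π Cp ∈ LinearMap.ker dF) {a b : F} (ha : a ∈ LinearMap.ker dF)
    (hb : b ∈ LinearMap.ker dF) (hab : a * b ∈ LinearMap.ker dF) {s t s' t' : k}
    (hx : (Submodule.Quotient.mk ⟨a, ha⟩ : cohomology dF) =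
      s • Submodule.Quotient.mk ⟨1, h1⟩ + t • Submodule.Quotient.mk ⟨π Cp, hC⟩)
    (hy : (Submodule.Quotient.mk ⟨b, hb⟩ : cohomology dF) =
      s' • Submodule.Quotient.mk ⟨1, h1⟩ + t' • Submodule.Quotient.mk ⟨π Cp, hC⟩) :
    (Submodule.Quotient.mk ⟨a * b, hab⟩ : cohomology dF) =
      (s * s' + t * t' * B) • Submodule.Quotient.mk ⟨1, h1⟩ +
        (s * t' + t * s') • Submodule.Quotient.mk ⟨π Cp, hC⟩ := by
  rw [cohomology.smul_mk_add_smul_mk, cohomology.mk_eq_mk_iff] at hx hy ⊢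
  exact mul_sub_smul_one_add_smul_mem_range hπ hπp hdF hmul hCp hB hb hx hy
end Quotient



theorem Matrix.toQuadraticForm'_const_single {k : Type*} [CommRing k] (B : k) :
    (Matrix.of fun (_ _ : Fin 1) => B).toQuadraticForm' (Pi.single 0 1) = B := by
  simp [Matrix.toQuadraticForm', LinearMap.BilinMap.toQuadraticMap_apply,
    Matrix.toLinearMap₂'_apply]

theorem stmt8_general {k W F : Type*} [Field k]
    [Ring W] [Algebra k W] [Ring F] [Algebra k F]
    (𝒜 : ZMod 2 → Submodule k W) [GradedAlgebra 𝒜]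
    (d : W →ₗ[k] W)
    (hd2 : ∀ w, d (d w) = 0)
    (hleib : ∀ (i : ZMod 2) (x : W), x ∈ 𝒜 i → ∀ y : W,
      d (x * y) = d x * y + ((-1 : k) ^ i.val) • (x * d y))
    (htriv : ∀ w : W, d w = 0 → ∃ (c : k) (v : W), w = algebraMap k W c + d v)
    (hinj : ∀ c : k, (∃ v : W, algebraMap k W c = d v) → c = 0)
    (p Cp : W)
    (hp_even : p ∈ 𝒜 0)
    (hp_central : ∀ w : W, p * w = w * p)
    (hCp_odd : Cp ∈ 𝒜 1)
    (hdCp : d Cp = p)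
    -- `k[p]` is a polynomial ring: the powers of `p` are linearly independent
    (hpoly : LinearIndependent k (fun m : ℕ => p ^ m))
    -- `W` is a free `k[p]`-module
    (hfree : ∃ (ι : Type*) (e : ι → W),
      Function.Bijective (fun f : ι →₀ (Algebra.adjoin k ({p} : Set W)) =>
        f.sum fun j s => (s : W) * e j))
    -- the quotient `F = W/⟨p⟩`
    (π : W →ₐ[k] F) (hπ : Function.Surjective π)
    (hker : ∀ w : W, π w = 0 ↔ w ∈ Ideal.span ({p} : Set W))
    (dF : F →ₗ[k] F) (hdF : ∀ w : W, dF (π w) = π (d w)) :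
    ∃ B : k,
      -- `B = B(p,p)` is the class of `C_p · C_p` in `H(W) ≅ k`
      (∃ v : W, Cp * Cp = algebraMap k W B + d v) ∧
      ∀ (h1 : (1 : F) ∈ LinearMap.ker dF)
        (hC : π Cp ∈ LinearMap.ker dF)
        (hCC : π Cp * π Cp ∈ LinearMap.ker dF),
      -- `{[1], [C_p]}` is a basis: linearly independent and `dim H(F) = 2`
      LinearIndependent k
        ![(Submodule.Quotient.mk ⟨1, h1⟩ : cohomology dF),
          (Submodule.Quotient.mk ⟨π Cp, hC⟩ : cohomology dF)] ∧
      Module.finrank k (cohomology dF) = 2 ∧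
      -- `[C_p]² = B(p,p) · [1]`
      (Submodule.Quotient.mk ⟨π Cp * π Cp, hCC⟩ : cohomology dF)
        = B • (Submodule.Quotient.mk ⟨1, h1⟩ : cohomology dF) ∧
      -- hence `H(F) ≅ Cl(k·p, B)` as algebras
      ∃ φ : CliffordAlgebra
          ((Matrix.of fun (_ _ : Fin 1) => B).toQuadraticMap') ≃ₗ[k] cohomology dF,
        φ 1 = Submodule.Quotient.mk ⟨1, h1⟩ ∧
        φ (CliffordAlgebra.ι _ (Pi.single 0 1)) = Submodule.Quotient.mk ⟨π Cp, hC⟩ ∧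
        (∀ (x y : CliffordAlgebra ((Matrix.of fun (_ _ : Fin 1) => B).toQuadraticMap'))
            (a b : F)
            (ha : a ∈ LinearMap.ker dF) (hb : b ∈ LinearMap.ker dF)
            (hab : a * b ∈ LinearMap.ker dF),
          φ x = Submodule.Quotient.mk ⟨a, ha⟩ →
          φ y = Submodule.Quotient.mk ⟨b, hb⟩ →
          φ (x * y) = Submodule.Quotient.mk ⟨a * b, hab⟩) := by
  have hdp : ∀ u, d (p * u) = p * d u := fun u => by
    rw [map_mul_of_mem_zero hleib hp_even, ← hdCp, hd2, zero_mul, zero_add]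
  have hCp : ∀ y, d (Cp * y) = p * y - Cp * d y := fun y => by
    rw [map_mul_of_mem_one hleib hCp_odd, hdCp]
  have hmul := exists_map_mul_eq_map_mul_add_mul_map hleib
  have hreg : ∀ x, p * x = 0 → x = 0 := fun x => eq_zero_of_mul_eq_zero_of_free hpoly hfree
  have hπp : π p = 0 := (hker p).2 (Ideal.subset_span rfl)
  have hπker : ∀ w, π w = 0 → ∃ m, w = p * m := fun w hw => by
    obtain ⟨m, rfl⟩ := Ideal.mem_span_singleton'.mp ((hker w).1 hw)
    exact ⟨m, (hp_central m).symm⟩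
  obtain ⟨B, v, hB⟩ := htriv (Cp * Cp) (by rw [hCp, hdCp, hp_central, sub_self])
  refine ⟨B, ⟨v, hB⟩, fun h1 hC hCC => ?_⟩
  have hli := linearIndependent_mk_one_mk hd2 (map_one_eq_zero_of_leibniz hleib) hdp hreg htriv
    hinj hdCp hπ hπker hdF h1 hC
  have hsp := exists_smul_mk_one_add_smul_mk_eq hd2 hdp hreg htriv hdCp hπ hπker hπp hdF h1 hC
  obtain ⟨φ, hφ⟩ := CliffordAlgebra.exists_linearEquiv_smul_one_add_smul_ι _ hli hsp
  have hQ : (Matrix.of fun (_ _ : Fin 1) => B).toQuadraticMap' (Pi.single 0 1) = B :=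
    Matrix.toQuadraticForm'_const_single B
  refine ⟨hli, ?_, ?_, φ, by simpa using hφ 1 0, by simpa using hφ 0 1, ?_⟩
  · rw [Module.finrank_eq_card_basis (Module.Basis.mk hli (top_le_span_range_pair hsp)),
      Fintype.card_fin]
  · simpa using mk_mul_eq_smul_add_smul hπ hπp hdF hmul hCp hB h1 hC hC hC hCC
      (s := 0) (t := 1) (s' := 0) (t' := 1) (by simp) (by simp)
  · intro x y a b ha hb hab hx hy
    obtain ⟨s, t, rfl⟩ := CliffordAlgebra.exists_eq_smul_one_add_smul_ι _ x
    obtain ⟨s', t', rfl⟩ := CliffordAlgebra.exists_eq_smul_one_add_smul_ι _ y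
    rw [hφ] at hx hy
    rw [CliffordAlgebra.smul_one_add_smul_ι_mul, hφ, hQ]
    exact (mk_mul_eq_smul_add_smul hπ hπp hdF hmul hCp hB h1 hC ha hb hab hx.symm hy.symm).symm

/-- let `W` be a `Z/2`-graded differential algebra over `k`
(char 0) with `H(W) ≅ k`, `p` an even central coboundary generating a
polynomial subalgebra `k[p]` over which `W` is free, and `F = W/⟨p⟩` the
quotient with induced differential `dF`.  Then `H(F)` is two-dimensional with
basis `{[1], [C_p]}` (`d C_p = p`), `[C_p]² = B(p,p)·[1]` where
`B(p,p) = [C_p·C_p] ∈ H(W) ≅ k`, and hence `H(F) ≅ Cl(k·p, B)` as algebras. -/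
theorem stmt8 {k W F : Type*} [Field k] [CharZero k]
    [Ring W] [Algebra k W] [Ring F] [Algebra k F]
    (𝒜 : ZMod 2 → Submodule k W) [GradedAlgebra 𝒜]
    (d : W →ₗ[k] W)
    (hd2 : ∀ w, d (d w) = 0)
    (hodd : ∀ (i : ZMod 2), ∀ x ∈ 𝒜 i, d x ∈ 𝒜 (i + 1))
    (hleib : ∀ (i : ZMod 2) (x : W), x ∈ 𝒜 i → ∀ y : W,
      d (x * y) = d x * y + ((-1 : k) ^ i.val) • (x * d y))
    (htriv : ∀ w : W, d w = 0 → ∃ (c : k) (v : W), w = algebraMap k W c + d v)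
    (hinj : ∀ c : k, (∃ v : W, algebraMap k W c = d v) → c = 0)
    (p Cp : W)
    (hp_even : p ∈ 𝒜 0)
    (hp_central : ∀ w : W, p * w = w * p)
    (hCp_odd : Cp ∈ 𝒜 1)
    (hdCp : d Cp = p)
    -- `k[p]` is a polynomial ring: the powers of `p` are linearly independent
    (hpoly : LinearIndependent k (fun m : ℕ => p ^ m))
    -- `W` is a free `k[p]`-module
    (hfree : ∃ (ι : Type*) (e : ι → W),
      Function.Bijective (fun f : ι →₀ (Algebra.adjoin k ({p} : Set W)) =>
        f.sum fun j s => (s : W) * e j))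
    -- the quotient `F = W/⟨p⟩`
    (π : W →ₐ[k] F) (hπ : Function.Surjective π)
    (hker : ∀ w : W, π w = 0 ↔ w ∈ Ideal.span ({p} : Set W))
    (dF : F →ₗ[k] F) (hdF : ∀ w : W, dF (π w) = π (d w)) :
    ∃ B : k,
      -- `B = B(p,p)` is the class of `C_p · C_p` in `H(W) ≅ k`
      (∃ v : W, Cp * Cp = algebraMap k W B + d v) ∧
      ∀ (h1 : (1 : F) ∈ LinearMap.ker dF)
        (hC : π Cp ∈ LinearMap.ker dF)
        (hCC : π Cp * π Cp ∈ LinearMap.ker dF),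
      -- `{[1], [C_p]}` is a basis: linearly independent and `dim H(F) = 2`
      LinearIndependent k
        ![(Submodule.Quotient.mk ⟨1, h1⟩ : cohomology dF),
          (Submodule.Quotient.mk ⟨π Cp, hC⟩ : cohomology dF)] ∧
      Module.finrank k (cohomology dF) = 2 ∧
      -- `[C_p]² = B(p,p) · [1]`
      (Submodule.Quotient.mk ⟨π Cp * π Cp, hCC⟩ : cohomology dF)
        = B • (Submodule.Quotient.mk ⟨1, h1⟩ : cohomology dF) ∧
      -- hence `H(F) ≅ Cl(k·p, B)` as algebras
      ∃ φ : CliffordAlgebra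
          ((Matrix.of fun (_ _ : Fin 1) => B).toQuadraticMap') ≃ₗ[k] cohomology dF,
        φ 1 = Submodule.Quotient.mk ⟨1, h1⟩ ∧
        φ (CliffordAlgebra.ι _ (Pi.single 0 1)) = Submodule.Quotient.mk ⟨π Cp, hC⟩ ∧
        (∀ (x y : CliffordAlgebra ((Matrix.of fun (_ _ : Fin 1) => B).toQuadraticMap'))
            (a b : F)
            (ha : a ∈ LinearMap.ker dF) (hb : b ∈ LinearMap.ker dF)
            (hab : a * b ∈ LinearMap.ker dF),
          φ x = Submodule.Quotient.mk ⟨a, ha⟩ →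
          φ y = Submodule.Quotient.mk ⟨b, hb⟩ →
          φ (x * y) = Submodule.Quotient.mk ⟨a * b, hab⟩) :=
  stmt8_general 𝒜 d hd2 hleib htriv hinj p Cp hp_even hp_central hCp_odd hdCp hpoly hfree π hπ hker
    dF hdF
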